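/- (x₂-part of Theorem 2, verification form.) Fix a > b > 0, 𝔥 > 1 and E > 0, set h = √𝔥 and γ = √(E(𝔥 − 1)/𝔥), and let δ, α, β be the ridge constants. Let g : I → ℝ be differentiable with g(p) + δ > 0 on I, let 𝔭 : J → I be differentiable with 𝔭̇(t) = 1/(h·(g(𝔭(t)) + δ)) for all t ∈ J, and fix 𝔭₀ ∈ I. Then x₂(t) := √(1 − 𝔥⁻¹)·t + √(𝔥 − 1)·(b − a)·(𝔭(t) − 𝔭₀) satisfies ẋ₂(t) = (γ/√E)·(1 + (b − a)/(g(𝔭(t)) + δ)) for all t ∈ J; this is the Hamilton equation ẋ₂ = ∂ℋ/∂p₂ for the underwater-ridge Hamiltonian evaluated with p₂ = γ, ℋ = √E and x₁² + a = g(𝔭) + δ. -/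
import Mathlib


/-- The ridge constant `δ = ((b − a)𝔥 + 3a − 2b)/3`. -/
noncomputable def ridgeDelta (a b 𝔥 : ℝ) : ℝ := ((b - a) * 𝔥 + 3 * a - 2 * b) / 3

/-- (`x₂`-part of Theorem 2, verification form.)
Fix `a > b > 0`, `𝔥 > 1`, `E > 0`, set `h = √𝔥` and `γ = √(E(𝔥 − 1)/𝔥)`, and
let `δ` be the ridge constant.  Let `g : I → ℝ` be differentiable with
`g(p) + δ > 0` on `I`, let `𝔭 : J → I` be differentiable with
`𝔭̇(t) = 1/(h·(g(𝔭(t)) + δ))`, and fix `𝔭₀ ∈ I`.  Then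
`x₂(t) := √(1 − 𝔥⁻¹)·t + √(𝔥 − 1)·(b − a)·(𝔭(t) − 𝔭₀)` satisfies
`ẋ₂(t) = (γ/√E)·(1 + (b − a)/(g(𝔭(t)) + δ))` for all `t ∈ J`; this is the
Hamilton equation `ẋ₂ = ∂ℋ/∂p₂` for the underwater-ridge Hamiltonian
evaluated with `p₂ = γ`, `ℋ = √E` and `x₁² + a = g(𝔭) + δ`. -/
theorem ridge_x2_verification
    (a b 𝔥 E h γ : ℝ) (hb : 0 < b) (hab : b < a) (h𝔥 : 1 < 𝔥) (hE : 0 < E)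
    (hh : h = Real.sqrt 𝔥) (hγ : γ = Real.sqrt (E * (𝔥 - 1) / 𝔥))
    (I J : Set ℝ)
    (g : ℝ → ℝ)
    (hgdiff : ∀ p ∈ I, DifferentiableAt ℝ g p)
    (hgpos : ∀ p ∈ I, 0 < g p + ridgeDelta a b 𝔥)
    (𝔭 : ℝ → ℝ) (h𝔭mem : ∀ t ∈ J, 𝔭 t ∈ I)
    (h𝔭 : ∀ t ∈ J, HasDerivAt 𝔭 (1 / (h * (g (𝔭 t) + ridgeDelta a b 𝔥))) t)
    (𝔭₀ : ℝ) (h𝔭₀ : 𝔭₀ ∈ I) :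
    ∀ t ∈ J,
      HasDerivAt
        (fun s => Real.sqrt (1 - 𝔥⁻¹) * s + Real.sqrt (𝔥 - 1) * (b - a) * (𝔭 s - 𝔭₀))
        ((γ / Real.sqrt E) * (1 + (b - a) / (g (𝔭 t) + ridgeDelta a b 𝔥))) t := by
  intro t ht
  have h𝔥0 : (0:ℝ) < 𝔥 := lt_trans one_pos h𝔥
  have hgt : 0 < g (𝔭 t) + ridgeDelta a b 𝔥 := hgpos _ (h𝔭mem t ht)
  have hh0 : 0 < h := hh ▸ Real.sqrt_pos.mpr h𝔥0
  -- key scalar identities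
  have hc : γ / Real.sqrt E = Real.sqrt (1 - 𝔥⁻¹) := by
    rw [hγ]
    have : E * (𝔥 - 1) / 𝔥 = E * ((𝔥 - 1) / 𝔥) := by ring
    rw [this, Real.sqrt_mul hE.le, mul_comm, mul_div_assoc,
      div_self (ne_of_gt (Real.sqrt_pos.mpr hE)), mul_one]
    congr 1
    field_simp
  have hc2 : Real.sqrt (𝔥 - 1) / h = Real.sqrt (1 - 𝔥⁻¹) := by
    rw [hh, ← Real.sqrt_div (by linarith) 𝔥]
    congr 1
    field_simp
  have hD : HasDerivAt
      (fun s => Real.sqrt (1 - 𝔥⁻¹) * s + Real.sqrt (𝔥 - 1) * (b - a) * (𝔭 s - 𝔭₀))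
      (Real.sqrt (1 - 𝔥⁻¹) * 1 + Real.sqrt (𝔥 - 1) * (b - a) *
        (1 / (h * (g (𝔭 t) + ridgeDelta a b 𝔥)))) t := by
    exact ((hasDerivAt_id t).const_mul _).add
      (((h𝔭 t ht).sub_const 𝔭₀).const_mul _)
  convert hD using 1
  rw [div_eq_iff hh0.ne'] at hc2
  rw [hc, hc2]
  field_simp
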